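/- Let λ = a + ib be a complex number and σ ∈ E a unit vector with σ ≠ ω. Then f_λ⁻(σ) := Ψ⁻¹(F_λ(Φ(σ))) = [(a²+b²+1) + (a²+b²−1)⟨σ,ω⟩]⁻¹ · ( 2aσ − 2b(σ×ω) − 2a⟨σ,ω⟩ω − [(a²+b²−1) + (a²+b²+1)⟨σ,ω⟩]ω ); in particular f_λ⁻(σ) = f_λ⁺(σ) − 2⟨f_λ⁺(σ),ω⟩ω, i.e. the points f_λ⁻(σ) and f_λ⁺(σ) := Φ⁻¹(F_λ(Φ(σ))) are symmetric with respect to the plane ω^⊥. -/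

import Mathlib

open scoped RealInnerProductSpace

/-- The stereographic projection of the unit sphere of `E` from the point `ω` onto the plane
`ω^⊥`: `Φ(σ) = (σ − ⟨σ,ω⟩ω)/(1 − ⟨σ,ω⟩)`. -/
noncomputable def sproj {E : Type*} [NormedAddCommGroup E] [InnerProductSpace ℝ E]
    (ω σ : E) : E :=
  (1 - ⟪σ, ω⟫)⁻¹ • (σ - ⟪σ, ω⟫ • ω)

/-- The inverse stereographic projection from the point `ω`:
`Φ⁻¹(ζ) = (2ζ + (‖ζ‖² − 1)ω)/(‖ζ‖² + 1)`. -/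
noncomputable def sprojInv {E : Type*} [NormedAddCommGroup E] [InnerProductSpace ℝ E]
    (ω ζ : E) : E :=
  (‖ζ‖ ^ 2 + 1)⁻¹ • ((2 : ℝ) • ζ + (‖ζ‖ ^ 2 - 1) • ω)

/-- The inverse stereographic projection from the point `−ω`:
`Ψ⁻¹(ζ) = (2ζ + (1 − ‖ζ‖²)ω)/(‖ζ‖² + 1)`. -/
noncomputable def sprojInvNeg {E : Type*} [NormedAddCommGroup E] [InnerProductSpace ℝ E]
    (ω ζ : E) : E :=
  (‖ζ‖ ^ 2 + 1)⁻¹ • ((2 : ℝ) • ζ + (1 - ‖ζ‖ ^ 2) • ω)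

/-!
Put `t = ⟪σ, ω⟫` and `ζ = Φ(σ)`. Then `ζ ⊥ ω` and `‖ζ‖² = (1 + t)/(1 - t)`. Hadamard's inequality
for the volume form gives `‖u × v‖ ≤ ‖u‖‖v‖`, with equality when `u ⊥ v` (test against a vector
orthogonal to both), so `ω × ·` is an isometry of `ω^⊥` orthogonal to the identity and
`‖F_λ ζ‖² = |λ|² ‖ζ‖²`. Substituting this into `Ψ⁻¹` gives the formula. The symmetry holds for every
`ζ ∈ ω^⊥`: `Φ⁻¹ ζ` and `Ψ⁻¹ ζ` differ only in the sign of their `ω`-component.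
-/

section Stereographic

variable {E : Type*} [NormedAddCommGroup E] [InnerProductSpace ℝ E] {ω : E}

theorem inner_sproj_self (hω : ‖ω‖ = 1) (σ : E) : ⟪sproj ω σ, ω⟫ = 0 := by
  simp only [sproj, real_inner_smul_left, inner_sub_left, real_inner_self_eq_norm_sq, hω]
  ring

theorem norm_sq_sproj (hω : ‖ω‖ = 1) {σ : E} (hσ : ‖σ‖ = 1) (hσω : ⟪σ, ω⟫ ≠ 1) :
    ‖sproj ω σ‖ ^ 2 = (1 + ⟪σ, ω⟫) / (1 - ⟪σ, ω⟫) := by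
  have hne : 1 - ⟪σ, ω⟫ ≠ 0 := sub_ne_zero.mpr hσω.symm
  have hσσ : ⟪σ, σ⟫ = 1 := by rw [real_inner_self_eq_norm_sq, hσ, one_pow]
  have hωω : ⟪ω, ω⟫ = 1 := by rw [real_inner_self_eq_norm_sq, hω, one_pow]
  rw [← real_inner_self_eq_norm_sq]
  simp only [sproj, real_inner_smul_left, real_inner_smul_right, inner_sub_left, inner_sub_right,
    hσσ, hωω, real_inner_comm σ ω]
  field_simp
  ring

theorem sprojInvNeg_eq_sprojInv_sub_of_inner_eq_zero (hω : ‖ω‖ = 1) {ζ : E} (hζ : ⟪ζ, ω⟫ = 0) :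
    sprojInvNeg ω ζ = sprojInv ω ζ - (2 * ⟪sprojInv ω ζ, ω⟫) • ω := by
  have hω' : ⟪ω, ω⟫ = 1 := by rw [real_inner_self_eq_norm_sq, hω, one_pow]
  simp only [sprojInvNeg, sprojInv, inner_add_left, real_inner_smul_left, hζ, hω']
  match_scalars <;> ring

end Stereographic

theorem exists_ne_zero_orthogonal_pair_of_finrank_eq_three {E : Type*} [NormedAddCommGroup E]
    [InnerProductSpace ℝ E] [Fact (Module.finrank ℝ E = 3)] (u v : E) :
    ∃ x ≠ 0, ⟪u, x⟫ = 0 ∧ ⟪v, x⟫ = 0 := by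
  have : FiniteDimensional ℝ E := .of_fact_finrank_eq_succ 2
  set K := Submodule.span ℝ (Set.range ![u, v])
  have hK : K ≠ ⊤ := by
    intro h
    have : Module.finrank ℝ K ≤ 2 := finrank_range_le_card ![u, v]
    rw [h, finrank_top, Fact.out (p := Module.finrank ℝ E = 3)] at this
    omega
  obtain ⟨x, hxK, hx0⟩ :=
    Submodule.exists_mem_ne_zero_of_ne_bot (mt K.orthogonal_eq_bot_iff.mp hK)
  exact ⟨x, hx0, hxK u (Submodule.subset_span ⟨0, rfl⟩), hxK v (Submodule.subset_span ⟨1, rfl⟩)⟩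

section CrossProduct

variable {E : Type*} [NormedAddCommGroup E] [InnerProductSpace ℝ E]
  [Fact (Module.finrank ℝ E = 3)]

def IsCrossProduct (o : Orientation ℝ E (Fin 3)) (cross : E →ₗ[ℝ] E →ₗ[ℝ] E) : Prop :=
  ∀ x y z : E, ⟪cross x y, z⟫ = o.volumeForm ![x, y, z]

namespace IsCrossProduct

variable {o : Orientation ℝ E (Fin 3)} {cross : E →ₗ[ℝ] E →ₗ[ℝ] E}
  (hcross : IsCrossProduct o cross)
include hcross

theorem inner_self_left (u v : E) : ⟪cross u v, u⟫ = 0 := by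
  rw [hcross]
  exact o.volumeForm.map_eq_zero_of_eq _ (i := 0) (j := 2) rfl (by decide)

theorem inner_self_right (u v : E) : ⟪cross u v, v⟫ = 0 := by
  rw [hcross]
  exact o.volumeForm.map_eq_zero_of_eq _ (i := 1) (j := 2) rfl (by decide)

theorem self_eq_zero (u : E) : cross u u = 0 :=
  ext_inner_right ℝ fun z => by
    rw [hcross, inner_zero_left]
    exact o.volumeForm.map_eq_zero_of_eq _ (i := 0) (j := 1) rfl (by decide)

theorem anticomm (u v : E) : cross u v = -cross v u := by
  have h := hcross.self_eq_zero (u + v)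
  simp only [map_add, LinearMap.add_apply, hcross.self_eq_zero, zero_add, add_zero] at h
  exact eq_neg_of_add_eq_zero_right h

theorem norm_le (u v : E) : ‖cross u v‖ ≤ ‖u‖ * ‖v‖ := by
  have h : ‖cross u v‖ * ‖cross u v‖ ≤ ‖u‖ * ‖v‖ * ‖cross u v‖ := by
    have := o.volumeForm_apply_le ![u, v, cross u v]
    rwa [← hcross, real_inner_self_eq_norm_mul_norm, Fin.prod_univ_three] at this
  rcases (norm_nonneg (cross u v)).eq_or_lt with h0 | hpos
  · rw [← h0]; positivity
  · exact le_of_mul_le_mul_right h hpos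

theorem norm_of_inner_eq_zero {u v : E} (huv : ⟪u, v⟫ = 0) : ‖cross u v‖ = ‖u‖ * ‖v‖ := by
  refine le_antisymm (hcross.norm_le u v) ?_
  obtain ⟨x, hx0, hux, hvx⟩ := exists_ne_zero_orthogonal_pair_of_finrank_eq_three u v
  have hpair : Pairwise fun i j => ⟪![u, v, x] i, ![u, v, x] j⟫ = 0 := by
    intro i j hij
    fin_cases i <;> fin_cases j <;> simp_all [real_inner_comm]
  have h : ‖u‖ * ‖v‖ * ‖x‖ ≤ ‖cross u v‖ * ‖x‖ := by
    have := o.abs_volumeForm_apply_of_pairwise_orthogonal hpair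
    rw [← hcross, Fin.prod_univ_three] at this
    simpa [this, mul_assoc] using abs_real_inner_le_norm (cross u v) x
  exact le_of_mul_le_mul_right h (norm_pos_iff.mpr hx0)

theorem inner_smul_add_smul_cross_self (a b : ℝ) {ω ζ : E} (hζ : ⟪ζ, ω⟫ = 0) :
    ⟪a • ζ + b • cross ω ζ, ω⟫ = 0 := by
  simp [inner_add_left, real_inner_smul_left, hζ, hcross.inner_self_left]

theorem norm_sq_smul_add_smul_cross (a b : ℝ) {ω ζ : E} (hω : ‖ω‖ = 1) (hζ : ⟪ζ, ω⟫ = 0) :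
    ‖a • ζ + b • cross ω ζ‖ ^ 2 = (a ^ 2 + b ^ 2) * ‖ζ‖ ^ 2 := by
  have hnorm : ‖cross ω ζ‖ = ‖ζ‖ := by
    rw [hcross.norm_of_inner_eq_zero (real_inner_comm ζ ω ▸ hζ), hω, one_mul]
  have horth : ⟪ζ, cross ω ζ⟫ = 0 := by rw [real_inner_comm, hcross.inner_self_right]
  rw [norm_add_sq_real, norm_smul, norm_smul, mul_pow, mul_pow, hnorm, Real.norm_eq_abs,
    Real.norm_eq_abs, sq_abs, sq_abs, real_inner_smul_left, real_inner_smul_right, horth]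
  ring

theorem sprojInvNeg_smul_add_smul_cross_sproj {ω : E} (hω : ‖ω‖ = 1) (a b : ℝ) {σ : E}
    (hσ : ‖σ‖ = 1) (hσω : σ ≠ ω) :
    sprojInvNeg ω (a • sproj ω σ + b • cross ω (sproj ω σ)) =
      ((a ^ 2 + b ^ 2 + 1) + (a ^ 2 + b ^ 2 - 1) * ⟪σ, ω⟫)⁻¹ •
        ((2 * a) • σ - (2 * b) • cross σ ω - (2 * a * ⟪σ, ω⟫) • ω -
          ((a ^ 2 + b ^ 2 - 1) + (a ^ 2 + b ^ 2 + 1) * ⟪σ, ω⟫) • ω) := by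
  have ht1 : ⟪σ, ω⟫ ≠ 1 := mt (inner_eq_one_iff_of_norm_eq_one hσ hω).mp hσω
  obtain ⟨hlow, hup⟩ : -1 ≤ ⟪σ, ω⟫ ∧ ⟪σ, ω⟫ ≤ 1 :=
    abs_le.mp (by simpa [hσ, hω] using abs_real_inner_le_norm σ ω)
  have hpos : 0 < 1 - ⟪σ, ω⟫ := sub_pos.mpr (lt_of_le_of_ne hup ht1)
  have hD : 0 < (a ^ 2 + b ^ 2 + 1) + (a ^ 2 + b ^ 2 - 1) * ⟪σ, ω⟫ := by
    nlinarith [mul_nonneg (add_nonneg (sq_nonneg a) (sq_nonneg b)) (neg_le_iff_add_nonneg.mp hlow)]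
  have hnorm := hcross.norm_sq_smul_add_smul_cross a b hω (inner_sproj_self hω σ)
  rw [norm_sq_sproj hω hσ ht1] at hnorm
  have hcross_sproj : cross ω (sproj ω σ) = -(1 - ⟪σ, ω⟫)⁻¹ • cross σ ω := by
    rw [sproj, map_smul, map_sub, map_smul, hcross.self_eq_zero, smul_zero, sub_zero,
      hcross.anticomm, smul_neg, neg_smul]
  rw [sprojInvNeg, hnorm, hcross_sproj, sproj]
  match_scalars <;> field_simp <;> ring

end IsCrossProduct

end CrossProduct

/-- Let `E` be a 3-dimensional oriented real inner product space with cross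
product `×`, `ω ∈ E` a unit vector, `λ = a + ib ∈ ℂ` and `F_λ(ζ) = aζ + b(ω×ζ)` on `ω^⊥`.
Then for every unit vector `σ ≠ ω`,
`f_λ⁻(σ) := Ψ⁻¹(F_λ(Φ(σ))) = [(a²+b²+1) + (a²+b²−1)⟨σ,ω⟩]⁻¹ ·
  ( 2aσ − 2b(σ×ω) − 2a⟨σ,ω⟩ω − [(a²+b²−1) + (a²+b²+1)⟨σ,ω⟩]ω )`;
in particular `f_λ⁻(σ) = f_λ⁺(σ) − 2⟨f_λ⁺(σ),ω⟩ω`, i.e. `f_λ⁻(σ)` and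
`f_λ⁺(σ) := Φ⁻¹(F_λ(Φ(σ)))` are symmetric with respect to the plane `ω^⊥`. -/
theorem stmt_14 {E : Type*} [NormedAddCommGroup E] [InnerProductSpace ℝ E]
    [Fact (Module.finrank ℝ E = 3)]
    (o : Orientation ℝ E (Fin 3))
    (cross : E →ₗ[ℝ] E →ₗ[ℝ] E)
    (hcross : ∀ x y z : E, ⟪cross x y, z⟫ = o.volumeForm ![x, y, z])
    (ω : E) (hω : ‖ω‖ = 1)
    (a b : ℝ) (σ : E) (hσ : ‖σ‖ = 1) (hσω : σ ≠ ω) :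
    sprojInvNeg ω (a • sproj ω σ + b • cross ω (sproj ω σ)) =
      ((a ^ 2 + b ^ 2 + 1) + (a ^ 2 + b ^ 2 - 1) * ⟪σ, ω⟫)⁻¹ •
        ((2 * a) • σ - (2 * b) • cross σ ω - (2 * a * ⟪σ, ω⟫) • ω -
          ((a ^ 2 + b ^ 2 - 1) + (a ^ 2 + b ^ 2 + 1) * ⟪σ, ω⟫) • ω) ∧
    sprojInvNeg ω (a • sproj ω σ + b • cross ω (sproj ω σ)) =
      sprojInv ω (a • sproj ω σ + b • cross ω (sproj ω σ)) -
        (2 * ⟪sprojInv ω (a • sproj ω σ + b • cross ω (sproj ω σ)), ω⟫) • ω := by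
  have hcross : IsCrossProduct o cross := hcross
  exact ⟨hcross.sprojInvNeg_smul_add_smul_cross_sproj hω a b hσ hσω,
    sprojInvNeg_eq_sprojInv_sub_of_inner_eq_zero hω
      (hcross.inner_smul_add_smul_cross_self a b (inner_sproj_self hω σ))⟩
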